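/- arXiv:2105.09339 — 4 statements merged into one kernel-verified Lean document; each statement's English description precedes it below -/
import Mathlib

section
/- Consider the coupled linear system: given (u,p) in V × Q (V, Q finite-dimensional real inner product spaces), find (w,r) ∈ V × Q such that ν⟪w,v⟫ + b(u,w,v) - ⟪r, D v⟫ = f(v) and ε⟪r,q⟫ + ⟪D w, q⟫ = ε⟪p,q⟫ for all (v,q) ∈ V × Q, where D : V → Q is linear, ν, ε > 0, and b(u,v,v) = 0. Then this system has at most one solution (w,r). -/
/-!
The system is linear in `(w, r)`, so the difference of two solutions solves it with `f = 0`
and `p = 0`. Testing that homogeneous system with `v = w`, `q = r` and adding, the coupling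
terms `⟪r, D w⟫` cancel and `b(u, w, w) = 0` drops out, leaving `ν ‖w‖² + ε ‖r‖² = 0`.
-/

open RealInnerProductSpace

theorem eq_zero_of_penalty_system_eq_zero
    {V Q : Type*} [NormedAddCommGroup V] [InnerProductSpace ℝ V]
    [NormedAddCommGroup Q] [InnerProductSpace ℝ Q]
    (D : V →ₗ[ℝ] Q) (B : V →ₗ[ℝ] V →ₗ[ℝ] ℝ) (hB : ∀ v, B v v = 0)
    {ν ε : ℝ} (hν : 0 < ν) (hε : 0 < ε) {w : V} {r : Q}
    (hw : ∀ v, ν * ⟪w, v⟫ + B w v - ⟪r, D v⟫ = 0)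
    (hr : ∀ q, ε * ⟪r, q⟫ + ⟪D w, q⟫ = 0) :
    w = 0 ∧ r = 0 := by
  have henergy : ν * ‖w‖ ^ 2 + ε * ‖r‖ ^ 2 = 0 := by
    have hww := hw w
    have hrr := hr r
    rw [hB, real_inner_self_eq_norm_sq] at hww
    rw [real_inner_self_eq_norm_sq] at hrr
    linarith [real_inner_comm (D w) r]
  obtain ⟨hw0, hr0⟩ := (add_eq_zero_iff_of_nonneg (by positivity) (by positivity)).1 henergy
  simpa [hν.ne', hε.ne'] using And.intro hw0 hr0

theorem ipp_step_uniqueness_general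
    {V Q : Type*} [NormedAddCommGroup V] [InnerProductSpace ℝ V]
    [NormedAddCommGroup Q] [InnerProductSpace ℝ Q]
    (D : V →ₗ[ℝ] Q)
    (b : V →ₗ[ℝ] V →ₗ[ℝ] V →ₗ[ℝ] ℝ) (hskew : ∀ u v : V, b u v v = 0)
    (ν ε : ℝ) (hν : 0 < ν) (hε : 0 < ε)
    (f : V →L[ℝ] ℝ) (u : V) (p : Q)
    (w₁ w₂ : V) (r₁ r₂ : Q)
    (h1 : ∀ v : V, ν * ⟪w₁, v⟫ + b u w₁ v - ⟪r₁, D v⟫ = f v)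
    (h1' : ∀ q : Q, ε * ⟪r₁, q⟫ + ⟪D w₁, q⟫ = ε * ⟪p, q⟫)
    (h2 : ∀ v : V, ν * ⟪w₂, v⟫ + b u w₂ v - ⟪r₂, D v⟫ = f v)
    (h2' : ∀ q : Q, ε * ⟪r₂, q⟫ + ⟪D w₂, q⟫ = ε * ⟪p, q⟫) :
    w₁ = w₂ ∧ r₁ = r₂ := by
  have hw : ∀ v, ν * ⟪w₁ - w₂, v⟫ + b u (w₁ - w₂) v - ⟪r₁ - r₂, D v⟫ = 0 := by
    intro v
    simp only [inner_sub_left, map_sub, LinearMap.sub_apply]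
    linarith [h1 v, h2 v]
  have hr : ∀ q, ε * ⟪r₁ - r₂, q⟫ + ⟪D (w₁ - w₂), q⟫ = 0 := by
    intro q
    simp only [inner_sub_left, map_sub]
    linarith [h1' q, h2' q]
  simpa [sub_eq_zero] using eq_zero_of_penalty_system_eq_zero D (b u) (hskew u) hν hε hw hr

theorem ipp_step_uniqueness
    {V Q : Type*} [NormedAddCommGroup V] [InnerProductSpace ℝ V] [FiniteDimensional ℝ V]
    [NormedAddCommGroup Q] [InnerProductSpace ℝ Q] [FiniteDimensional ℝ Q]
    (D : V →ₗ[ℝ] Q)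
    (b : V →ₗ[ℝ] V →ₗ[ℝ] V →ₗ[ℝ] ℝ) (hskew : ∀ u v : V, b u v v = 0)
    (ν ε : ℝ) (hν : 0 < ν) (hε : 0 < ε)
    (f : V →L[ℝ] ℝ) (u : V) (p : Q)
    (w₁ w₂ : V) (r₁ r₂ : Q)
    (h1 : ∀ v : V, ν * ⟪w₁, v⟫ + b u w₁ v - ⟪r₁, D v⟫ = f v)
    (h1' : ∀ q : Q, ε * ⟪r₁, q⟫ + ⟪D w₁, q⟫ = ε * ⟪p, q⟫)
    (h2 : ∀ v : V, ν * ⟪w₂, v⟫ + b u w₂ v - ⟪r₂, D v⟫ = f v)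
    (h2' : ∀ q : Q, ε * ⟪r₂, q⟫ + ⟪D w₂, q⟫ = ε * ⟪p, q⟫) :
    w₁ = w₂ ∧ r₁ = r₂ :=
  ipp_step_uniqueness_general D b hskew ν ε hν hε f u p w₁ w₂ r₁ r₂ h1 h1' h2 h2'
end

section
/- In the setting of the iterated penalty Picard step operator G(u,p) = (G₁(u,p), G₂(u,p)) solving ν⟪G₁,v⟫ + b(u,G₁,v) - ⟪G₂, Dv⟫ = f(v), ε⟪G₂,q⟫ + ⟪DG₁,q⟫ = ε⟪p,q⟫, the solution satisfies the energy bound ν‖G₁(u,p)‖² + ε‖G₂(u,p)‖² ≤ ε‖p‖² + ν⁻¹‖f‖_{V*}². -/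
/-!
Testing the first equation with `v = G₁` and the second with `q = G₂` kills the convective
term (by skew-symmetry) and the two coupling terms `⟪G₂, D G₁⟫` cancel, leaving the energy identity
`ν ‖G₁‖² + ε ‖G₂‖² = f G₁ + ε ⟪p, G₂⟫`. Young's inequality on each term of the right-hand side
absorbs half of the left-hand side.
-/

open RealInnerProductSpace

lemma mul_le_half_mul_sq_add_half_inv_mul_sq {c : ℝ} (hc : 0 < c) (a b : ℝ) :
    a * b ≤ c / 2 * a ^ 2 + c⁻¹ / 2 * b ^ 2 := by
  have hsq : 0 ≤ c⁻¹ * (c * a - b) ^ 2 := by positivity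
  have hinv : c⁻¹ * c = 1 := inv_mul_cancel₀ hc.ne'
  nlinarith

lemma penalty_system_energy_identity {V Q : Type*} [NormedAddCommGroup V] [InnerProductSpace ℝ V]
    [NormedAddCommGroup Q] [InnerProductSpace ℝ Q] (D : V →ₗ[ℝ] Q)
    (c : V →ₗ[ℝ] V →ₗ[ℝ] ℝ) (hc : ∀ v : V, c v v = 0) (ν ε : ℝ) (f : V → ℝ) (p : Q)
    (G₁ : V) (G₂ : Q)
    (hG1 : ∀ v : V, ν * ⟪G₁, v⟫ + c G₁ v - ⟪G₂, D v⟫ = f v)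
    (hG2 : ∀ q : Q, ε * ⟪G₂, q⟫ + ⟪D G₁, q⟫ = ε * ⟪p, q⟫) :
    ν * ‖G₁‖ ^ 2 + ε * ‖G₂‖ ^ 2 = f G₁ + ε * ⟪p, G₂⟫ := by
  have h1 := hG1 G₁
  have h2 := hG2 G₂
  rw [hc, real_inner_self_eq_norm_sq] at h1
  rw [real_inner_self_eq_norm_sq, real_inner_comm] at h2
  linarith

theorem ipp_step_energy_bound_general
    {V Q : Type*} [NormedAddCommGroup V] [InnerProductSpace ℝ V]
    [NormedAddCommGroup Q] [InnerProductSpace ℝ Q]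
    (D : V →ₗ[ℝ] Q)
    (b : V →ₗ[ℝ] V →ₗ[ℝ] V →ₗ[ℝ] ℝ) (hskew : ∀ u v : V, b u v v = 0)
    (ν ε : ℝ) (hν : 0 < ν) (hε : 0 < ε)
    (f : V →L[ℝ] ℝ) (u : V) (p : Q)
    (G₁ : V) (G₂ : Q)
    (hG1 : ∀ v : V, ν * ⟪G₁, v⟫ + b u G₁ v - ⟪G₂, D v⟫ = f v)
    (hG2 : ∀ q : Q, ε * ⟪G₂, q⟫ + ⟪D G₁, q⟫ = ε * ⟪p, q⟫) :
    ν * ‖G₁‖ ^ 2 + ε * ‖G₂‖ ^ 2 ≤ ε * ‖p‖ ^ 2 + ν⁻¹ * ‖f‖ ^ 2 := by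
  have henergy := penalty_system_energy_identity D (b u) (hskew u) ν ε f p G₁ G₂ hG1 hG2
  have hf : f G₁ ≤ ν / 2 * ‖G₁‖ ^ 2 + ν⁻¹ / 2 * ‖f‖ ^ 2 :=
    calc f G₁ ≤ ‖f‖ * ‖G₁‖ := (le_abs_self _).trans (f.le_opNorm G₁)
      _ = ‖G₁‖ * ‖f‖ := mul_comm _ _
      _ ≤ _ := mul_le_half_mul_sq_add_half_inv_mul_sq hν _ _
  have hp : 2 * ⟪p, G₂⟫ ≤ ‖p‖ ^ 2 + ‖G₂‖ ^ 2 :=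
    calc 2 * ⟪p, G₂⟫ ≤ 2 * ‖p‖ * ‖G₂‖ := by
          rw [mul_assoc]; exact mul_le_mul_of_nonneg_left (real_inner_le_norm p G₂) two_pos.le
      _ ≤ _ := two_mul_le_add_sq _ _
  linarith [mul_le_mul_of_nonneg_left hp hε.le]

theorem ipp_step_energy_bound
    {V Q : Type*} [NormedAddCommGroup V] [InnerProductSpace ℝ V] [FiniteDimensional ℝ V]
    [NormedAddCommGroup Q] [InnerProductSpace ℝ Q] [FiniteDimensional ℝ Q]
    (D : V →ₗ[ℝ] Q)
    (b : V →ₗ[ℝ] V →ₗ[ℝ] V →ₗ[ℝ] ℝ) (hskew : ∀ u v : V, b u v v = 0)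
    (ν ε : ℝ) (hν : 0 < ν) (hε : 0 < ε)
    (f : V →L[ℝ] ℝ) (u : V) (p : Q)
    (G₁ : V) (G₂ : Q)
    (hG1 : ∀ v : V, ν * ⟪G₁, v⟫ + b u G₁ v - ⟪G₂, D v⟫ = f v)
    (hG2 : ∀ q : Q, ε * ⟪G₂, q⟫ + ⟪D G₁, q⟫ = ε * ⟪p, q⟫) :
    ν * ‖G₁‖ ^ 2 + ε * ‖G₂‖ ^ 2 ≤ ε * ‖p‖ ^ 2 + ν⁻¹ * ‖f‖ ^ 2 :=
  ipp_step_energy_bound_general D b hskew ν ε hν hε f u p G₁ G₂ hG1 hG2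
end

section
/- The IPP operator G is Lipschitz continuous: for all (u,p), (w,z) in V × Q, ‖G(u,p) - G(w,z)‖_X ≤ C_L ‖(u,p) - (w,z)‖_X with C_L = max{1, κ + √(ε/ν³)·M‖p‖}, where κ = Mν⁻²‖f‖_{V*}. -/
/-!
Subtracting the IPP systems at `(u,p)` and `(w,z)` and testing with the difference
`e = G(u,p) - G(w,z)` kills the pressure coupling and, by skew-symmetry of `b`, every convective
term except `b(u - w, G₁(u,p), e₁)`. Bounding that term with `M`, the energy bound on `‖G₁(u,p)‖`
and Cauchy–Schwarz in the weighted norm `‖·‖_X` leaves `‖e‖_X² ≤ C_L ‖e‖_X ‖(u,p) - (w,z)‖_X`.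
-/

open RealInnerProductSpace

theorem weighted_mul_add_mul_le_sqrt_mul_sqrt {ν ε : ℝ} (hν : 0 ≤ ν) (hε : 0 ≤ ε)
    (a₁ a₂ d₁ d₂ : ℝ) :
    ν * (d₁ * a₁) + ε * (d₂ * a₂) ≤
      √(ν * d₁ ^ 2 + ε * d₂ ^ 2) * √(ν * a₁ ^ 2 + ε * a₂ ^ 2) := by
  rw [← Real.sqrt_mul (by positivity)]
  refine le_trans (le_abs_self _) (Real.abs_le_sqrt ?_)
  -- Lagrange's identity in the weighted form
  nlinarith [mul_nonneg (mul_nonneg hν hε) (sq_nonneg (d₁ * a₂ - d₂ * a₁))]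

theorem sqrt_weighted_le_mul_of_le {ν ε C a₁ a₂ d₁ d₂ : ℝ} (hν : 0 ≤ ν) (hε : 0 ≤ ε)
    (hC : 0 ≤ C) (h : ν * a₁ ^ 2 + ε * a₂ ^ 2 ≤ C * (ν * (d₁ * a₁) + ε * (d₂ * a₂))) :
    √(ν * a₁ ^ 2 + ε * a₂ ^ 2) ≤ C * √(ν * d₁ ^ 2 + ε * d₂ ^ 2) := by
  set X := √(ν * a₁ ^ 2 + ε * a₂ ^ 2)
  set Y := √(ν * d₁ ^ 2 + ε * d₂ ^ 2)
  have hX : X * X ≤ C * Y * X :=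
    calc X * X = ν * a₁ ^ 2 + ε * a₂ ^ 2 := Real.mul_self_sqrt (by positivity)
      _ ≤ C * (ν * (d₁ * a₁) + ε * (d₂ * a₂)) := h
      _ ≤ C * (Y * X) := by gcongr; exact weighted_mul_add_mul_le_sqrt_mul_sqrt hν hε ..
      _ = C * Y * X := by ring
  have hX0 : 0 ≤ X := Real.sqrt_nonneg _
  have hY0 : 0 ≤ C * Y := mul_nonneg hC (Real.sqrt_nonneg _)
  nlinarith

section IPP

variable {V Q : Type*} [NormedAddCommGroup V] [InnerProductSpace ℝ V]
  [NormedAddCommGroup Q] [InnerProductSpace ℝ Q]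

/-- `(G₁, G₂) = G(u, p)`: the IPP linear system with convecting velocity `u` and
previous pressure `p`. -/
structure IsIPPSolution (D : V →ₗ[ℝ] Q) (b : V →ₗ[ℝ] V →ₗ[ℝ] V →ₗ[ℝ] ℝ) (ν ε : ℝ)
    (f : V →L[ℝ] ℝ) (u : V) (p : Q) (G₁ : V) (G₂ : Q) : Prop where
  momentum : ∀ v : V, ν * ⟪G₁, v⟫ + b u G₁ v - ⟪G₂, D v⟫ = f v
  penalty : ∀ q : Q, ε * ⟪G₂, q⟫ + ⟪D G₁, q⟫ = ε * ⟪p, q⟫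

namespace IsIPPSolution

variable {D : V →ₗ[ℝ] Q} {b : V →ₗ[ℝ] V →ₗ[ℝ] V →ₗ[ℝ] ℝ} {ν ε : ℝ} {f : V →L[ℝ] ℝ}
  {u w G₁ H₁ : V} {p z G₂ H₂ : Q}

theorem energy_eq (hskew : ∀ u v : V, b u v v = 0)
    (hG : IsIPPSolution D b ν ε f u p G₁ G₂) :
    ν * ‖G₁‖ ^ 2 + ε * ‖G₂‖ ^ 2 = f G₁ + ε * ⟪p, G₂⟫ := by
  have hmom := hG.momentum G₁
  have hpen := hG.penalty G₂
  rw [hskew, real_inner_self_eq_norm_sq] at hmom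
  rw [real_inner_self_eq_norm_sq, real_inner_comm] at hpen
  linarith

theorem energy_sub_eq (hskew : ∀ u v : V, b u v v = 0)
    (hG : IsIPPSolution D b ν ε f u p G₁ G₂) (hH : IsIPPSolution D b ν ε f w z H₁ H₂) :
    ν * ‖G₁ - H₁‖ ^ 2 + ε * ‖G₂ - H₂‖ ^ 2 =
      -b (u - w) G₁ (G₁ - H₁) + ε * ⟪p - z, G₂ - H₂⟫ := by
  have hmomG := hG.momentum (G₁ - H₁)
  have hmomH := hH.momentum (G₁ - H₁)
  have hpenG := hG.penalty (G₂ - H₂)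
  have hpenH := hH.penalty (G₂ - H₂)
  -- `b w G₁ e - b w H₁ e = b w e e = 0`
  have hconv := hskew w (G₁ - H₁)
  rw [← real_inner_self_eq_norm_sq, ← real_inner_self_eq_norm_sq]
  simp only [map_sub, LinearMap.sub_apply, inner_sub_left, inner_sub_right,
    real_inner_comm (D G₁), real_inner_comm (D H₁)]
    at hmomG hmomH hpenG hpenH hconv ⊢
  linarith

theorem norm_fst_le (hskew : ∀ u v : V, b u v v = 0) (hν : 0 < ν) (hε : 0 ≤ ε)
    (hG : IsIPPSolution D b ν ε f u p G₁ G₂) :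
    ‖G₁‖ ≤ ν⁻¹ * ‖f‖ + √(ε / ν) * ‖p‖ := by
  have hX : ν * ‖G₁‖ ^ 2 + ε * ‖G₂‖ ^ 2 ≤ ν * (ν⁻¹ * ‖f‖) ^ 2 + ε * ‖p‖ ^ 2 := by
    have hf : f G₁ ≤ ‖f‖ * ‖G₁‖ := (le_abs_self _).trans (f.le_opNorm G₁)
    have hp : ⟪p, G₂⟫ ≤ ‖p‖ * ‖G₂‖ := real_inner_le_norm _ _
    have := sqrt_weighted_le_mul_of_le hν.le hε zero_le_one (a₁ := ‖G₁‖) (a₂ := ‖G₂‖)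
      (d₁ := ν⁻¹ * ‖f‖) (d₂ := ‖p‖) (by
        rw [energy_eq hskew hG, one_mul, ← mul_assoc ν, mul_inv_cancel_left₀ hν.ne']
        gcongr)
    rwa [one_mul, Real.sqrt_le_sqrt_iff (by positivity)] at this
  have hs : ν * √(ε / ν) ^ 2 = ε := by
    rw [Real.sq_sqrt (div_nonneg hε hν.le), mul_div_cancel₀ _ hν.ne']
  have hcross : 0 ≤ ν * (ν⁻¹ * ‖f‖) * (√(ε / ν) * ‖p‖) := by positivity
  rw [← pow_le_pow_iff_left₀ (norm_nonneg _) (by positivity) two_ne_zero,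
    ← mul_le_mul_iff_right₀ hν]
  nlinarith

theorem energy_sub_le (hskew : ∀ u v : V, b u v v = 0) {M : ℝ}
    (hbM : ∀ u v w : V, |b u v w| ≤ M * ‖u‖ * ‖v‖ * ‖w‖) (hε : 0 ≤ ε)
    (hG : IsIPPSolution D b ν ε f u p G₁ G₂) (hH : IsIPPSolution D b ν ε f w z H₁ H₂) :
    ν * ‖G₁ - H₁‖ ^ 2 + ε * ‖G₂ - H₂‖ ^ 2 ≤
      M * ‖u - w‖ * ‖G₁‖ * ‖G₁ - H₁‖ + ε * (‖p - z‖ * ‖G₂ - H₂‖) := by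
  rw [energy_sub_eq hskew hG hH]
  gcongr
  · exact (neg_le_abs _).trans (hbM _ _ _)
  · exact real_inner_le_norm _ _

theorem mul_norm_fst_le (hskew : ∀ u v : V, b u v v = 0) (hν : 0 < ν) (hε : 0 ≤ ε)
    {M : ℝ} (hM : 0 ≤ M) (hG : IsIPPSolution D b ν ε f u p G₁ G₂) :
    M * ‖G₁‖ ≤ (M * ν⁻¹ ^ 2 * ‖f‖ + √(ε / ν ^ 3) * M * ‖p‖) * ν := by
  have hsqrt : √(ε / ν ^ 3) = √(ε / ν) / ν := by
    rw [show ε / ν ^ 3 = ε / ν / ν ^ 2 by ring, Real.sqrt_div' _ (sq_nonneg ν),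
      Real.sqrt_sq hν.le]
  calc M * ‖G₁‖ ≤ M * (ν⁻¹ * ‖f‖ + √(ε / ν) * ‖p‖) := by
        gcongr; exact norm_fst_le hskew hν hε hG
    _ = (M * ν⁻¹ ^ 2 * ‖f‖ + √(ε / ν ^ 3) * M * ‖p‖) * ν := by
        rw [hsqrt]; field_simp

end IsIPPSolution

end IPP

theorem ipp_operator_lipschitz_general
    {V Q : Type*} [NormedAddCommGroup V] [InnerProductSpace ℝ V]
    [NormedAddCommGroup Q] [InnerProductSpace ℝ Q]
    (D : V →ₗ[ℝ] Q)
    (b : V →ₗ[ℝ] V →ₗ[ℝ] V →ₗ[ℝ] ℝ)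
    (hskew : ∀ u v : V, b u v v = 0)
    (M : ℝ) (hbM : ∀ u v w : V, |b u v w| ≤ M * ‖u‖ * ‖v‖ * ‖w‖)
    (ν ε : ℝ) (hν : 0 < ν) (hε : 0 < ε)
    (f : V →L[ℝ] ℝ)
    (κ : ℝ) (hκdef : κ = M * ν⁻¹ ^ 2 * ‖f‖)
    (u : V) (p : Q) (w : V) (z : Q)
    (Gu₁ : V) (Gu₂ : Q) (Gw₁ : V) (Gw₂ : Q)
    (hGu1 : ∀ v : V, ν * ⟪Gu₁, v⟫ + b u Gu₁ v - ⟪Gu₂, D v⟫ = f v)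
    (hGu2 : ∀ q : Q, ε * ⟪Gu₂, q⟫ + ⟪D Gu₁, q⟫ = ε * ⟪p, q⟫)
    (hGw1 : ∀ v : V, ν * ⟪Gw₁, v⟫ + b w Gw₁ v - ⟪Gw₂, D v⟫ = f v)
    (hGw2 : ∀ q : Q, ε * ⟪Gw₂, q⟫ + ⟪D Gw₁, q⟫ = ε * ⟪z, q⟫) :
    Real.sqrt (ν * ‖Gu₁ - Gw₁‖ ^ 2 + ε * ‖Gu₂ - Gw₂‖ ^ 2) ≤
      max 1 (κ + Real.sqrt (ε / ν ^ 3) * M * ‖p‖) *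
        Real.sqrt (ν * ‖u - w‖ ^ 2 + ε * ‖p - z‖ ^ 2) := by
  have hGu : IsIPPSolution D b ν ε f u p Gu₁ Gu₂ := ⟨hGu1, hGu2⟩
  have hGw : IsIPPSolution D b ν ε f w z Gw₁ Gw₂ := ⟨hGw1, hGw2⟩
  set C := max 1 (κ + √(ε / ν ^ 3) * M * ‖p‖)
  have hC : 1 ≤ C := le_max_left _ _
  have hMG : M * ‖Gu₁‖ ≤ C * ν := by
    rcases le_or_gt 0 M with hM | hM
    · calc M * ‖Gu₁‖ ≤ (κ + √(ε / ν ^ 3) * M * ‖p‖) * ν := by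
            rw [hκdef]; exact hGu.mul_norm_fst_le hskew hν hε.le hM
        _ ≤ C * ν := by gcongr; exact le_max_right _ _
    · nlinarith [norm_nonneg Gu₁]
  refine sqrt_weighted_le_mul_of_le hν.le hε.le (zero_le_one.trans hC) ?_
  calc ν * ‖Gu₁ - Gw₁‖ ^ 2 + ε * ‖Gu₂ - Gw₂‖ ^ 2
      ≤ M * ‖u - w‖ * ‖Gu₁‖ * ‖Gu₁ - Gw₁‖ + ε * (‖p - z‖ * ‖Gu₂ - Gw₂‖) :=
        hGu.energy_sub_le hskew hbM hε.le hGw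
    _ = M * ‖Gu₁‖ * (‖u - w‖ * ‖Gu₁ - Gw₁‖) + ε * (‖p - z‖ * ‖Gu₂ - Gw₂‖) := by ring
    _ ≤ C * ν * (‖u - w‖ * ‖Gu₁ - Gw₁‖) + C * (ε * (‖p - z‖ * ‖Gu₂ - Gw₂‖)) := by
        gcongr ?_ * _ + ?_
        exact le_mul_of_one_le_left (by positivity) hC
    _ = C * (ν * (‖u - w‖ * ‖Gu₁ - Gw₁‖) + ε * (‖p - z‖ * ‖Gu₂ - Gw₂‖)) := by ring

theorem ipp_operator_lipschitz
    {V Q : Type*} [NormedAddCommGroup V] [InnerProductSpace ℝ V] [FiniteDimensional ℝ V]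
    [NormedAddCommGroup Q] [InnerProductSpace ℝ Q] [FiniteDimensional ℝ Q]
    (D : V →ₗ[ℝ] Q)
    (b : V →ₗ[ℝ] V →ₗ[ℝ] V →ₗ[ℝ] ℝ)
    (hskew : ∀ u v : V, b u v v = 0)
    (M : ℝ) (hbM : ∀ u v w : V, |b u v w| ≤ M * ‖u‖ * ‖v‖ * ‖w‖)
    (ν ε : ℝ) (hν : 0 < ν) (hε : 0 < ε)
    (f : V →L[ℝ] ℝ)
    (κ : ℝ) (hκdef : κ = M * ν⁻¹ ^ 2 * ‖f‖)
    (u : V) (p : Q) (w : V) (z : Q)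
    (Gu₁ : V) (Gu₂ : Q) (Gw₁ : V) (Gw₂ : Q)
    (hGu1 : ∀ v : V, ν * ⟪Gu₁, v⟫ + b u Gu₁ v - ⟪Gu₂, D v⟫ = f v)
    (hGu2 : ∀ q : Q, ε * ⟪Gu₂, q⟫ + ⟪D Gu₁, q⟫ = ε * ⟪p, q⟫)
    (hGw1 : ∀ v : V, ν * ⟪Gw₁, v⟫ + b w Gw₁ v - ⟪Gw₂, D v⟫ = f v)
    (hGw2 : ∀ q : Q, ε * ⟪Gw₂, q⟫ + ⟪D Gw₁, q⟫ = ε * ⟪z, q⟫) :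
    Real.sqrt (ν * ‖Gu₁ - Gw₁‖ ^ 2 + ε * ‖Gu₂ - Gw₂‖ ^ 2) ≤
      max 1 (κ + Real.sqrt (ε / ν ^ 3) * M * ‖p‖) *
        Real.sqrt (ν * ‖u - w‖ ^ 2 + ε * ‖p - z‖ ^ 2) :=
  ipp_operator_lipschitz_general D b hskew M hbM ν ε hν hε f κ hκdef u p w z Gu₁ Gu₂ Gw₁ Gw₂ hGu1
    hGu2 hGw1 hGw2
end

section
/- Given (u,p), define the linear operator G'(u,p;·,·) : V × Q → V × Q by the system ν⟪G₁'(u,p;h,s),v⟫ + b(h, G₁(u,p), v) + b(u, G₁'(u,p;h,s), v) - ⟪G₂'(u,p;h,s), Dv⟫ = 0 and ε⟪G₂'(u,p;h,s),q⟫ + ⟪DG₁'(u,p;h,s), q⟫ = ε⟪s,q⟫ for all (v,q). Then G' is well-defined and bounded: ‖G'(u,p;h,s)‖_X ≤ C_L ‖(h,s)‖_X with C_L = max{1, κ + √(ε/ν³)M‖p‖}. -/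
/-!
Testing the system against the solution itself kills the convection term `b(u, g₁, g₁)` and
the coupling terms `∓⟪g₂, D g₁⟫`, leaving the energy identity
`ν‖g₁‖² + ε‖g₂‖² = -b(h, G₁, g₁) + ε⟪s, g₂⟫`. Hence the homogeneous system has only the
trivial solution, which in finite dimensions gives existence and uniqueness; and bounding the
right-hand side with the trilinear bound, the bound on `G₁`, and Cauchy–Schwarz in the weighted
norm gives `‖g‖_X² ≤ C_L ‖(h, s)‖_X ‖g‖_X`.
-/

open RealInnerProductSpace

theorem existsUnique_apply_eq_of_apply_self_eq_zero {K E : Type*} [Field K] [AddCommGroup E]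
    [Module K E] [FiniteDimensional K E] (B : E →ₗ[K] E →ₗ[K] K)
    (hB : ∀ x, B x x = 0 → x = 0) (F : E →ₗ[K] K) : ∃! x, B x = F := by
  have hinj : Function.Injective B := by
    rw [← LinearMap.ker_eq_bot, LinearMap.ker_eq_bot']
    intro x hx
    exact hB x (by rw [hx]; rfl)
  obtain ⟨x, hx⟩ :=
    (LinearMap.injective_iff_surjective_of_finrank_eq_finrank Subspace.dual_finrank_eq.symm).mp
      hinj F
  exact ⟨x, hx, fun y hy => hinj (hy.trans hx.symm)⟩

theorem mul_add_mul_le_sqrt_mul_sqrt {ν ε : ℝ} (hν : 0 ≤ ν) (hε : 0 ≤ ε) (a b c d : ℝ) :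
    ν * a * c + ε * b * d ≤ √(ν * a ^ 2 + ε * b ^ 2) * √(ν * c ^ 2 + ε * d ^ 2) := by
  rw [← Real.sqrt_mul (by positivity)]
  refine le_trans (le_abs_self _) (Real.abs_le_sqrt ?_)
  nlinarith [mul_nonneg (mul_nonneg hν hε) (sq_nonneg (a * d - b * c))]

theorem sqrt_div_pow_three_mul_self (ε : ℝ) {ν : ℝ} (hν : 0 ≤ ν) :
    √(ε / ν ^ 3) * ν = √(ε / ν) := by
  rw [← Real.sqrt_sq hν, ← Real.sqrt_mul' _ (by positivity), Real.sqrt_sq hν]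
  rcases hν.eq_or_lt with rfl | hν
  · simp
  · congr 1
    field_simp

theorem abs_trilinear_le_of_norm_le {V : Type*} [NormedAddCommGroup V] [InnerProductSpace ℝ V]
    {b : V →ₗ[ℝ] V →ₗ[ℝ] V →ₗ[ℝ] ℝ} {M : ℝ} (hbM : ∀ u v w : V, |b u v w| ≤ M * ‖u‖ * ‖v‖ * ‖w‖)
    (x z : V) {y : V} {R : ℝ} (hy : ‖y‖ ≤ R) :
    |b x y z| ≤ max 0 (M * R) * (‖x‖ * ‖z‖) := by
  have hxz : 0 ≤ ‖x‖ * ‖z‖ := by positivity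
  have hxyz := hbM x y z
  rcases le_or_gt 0 M with hM | hM
  · calc |b x y z| ≤ M * ‖y‖ * (‖x‖ * ‖z‖) := by linarith
      _ ≤ M * R * (‖x‖ * ‖z‖) := by gcongr
      _ ≤ max 0 (M * R) * (‖x‖ * ‖z‖) := by gcongr; exact le_max_right _ _
  · have : M * (‖y‖ * (‖x‖ * ‖z‖)) ≤ 0 := mul_nonpos_of_nonpos_of_nonneg hM.le (by positivity)
    calc |b x y z| ≤ 0 := by linarith
      _ ≤ max 0 (M * R) * (‖x‖ * ‖z‖) := mul_nonneg (le_max_left _ _) hxz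

section LinearizedSystem

variable {V Q : Type*} [NormedAddCommGroup V] [InnerProductSpace ℝ V]
  [NormedAddCommGroup Q] [InnerProductSpace ℝ Q]
  (D : V →ₗ[ℝ] Q) (b : V →ₗ[ℝ] V →ₗ[ℝ] V →ₗ[ℝ] ℝ) (ν ε : ℝ)

/-- The left-hand side of the system defining `G'(u, p; h, s)`, as one bilinear form on
`V × Q`: its first argument is the unknown, its second the test pair `(v, q)`. -/
noncomputable def linearizedForm (u : V) : (V × Q) →ₗ[ℝ] (V × Q) →ₗ[ℝ] ℝ :=
  LinearMap.mk₂ ℝ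
    (fun g w => ν * ⟪g.1, w.1⟫ + b u g.1 w.1 - ⟪g.2, D w.1⟫ + (ε * ⟪g.2, w.2⟫ + ⟪D g.1, w.2⟫))
    (fun _ _ _ => by simp only [Prod.fst_add, Prod.snd_add, map_add, LinearMap.add_apply,
        inner_add_left]; ring)
    (fun _ _ _ => by simp only [Prod.smul_fst, Prod.smul_snd, map_smul, LinearMap.smul_apply,
        real_inner_smul_left, smul_eq_mul]; ring)
    (fun _ _ _ => by simp only [Prod.fst_add, Prod.snd_add, map_add, inner_add_right]; ring)
    (fun _ _ _ => by simp only [Prod.smul_fst, Prod.smul_snd, map_smul, real_inner_smul_right,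
        smul_eq_mul]; ring)

noncomputable def linearizedRhs (G h : V) (s : Q) : (V × Q) →ₗ[ℝ] ℝ :=
  -(b h G ∘ₗ LinearMap.fst ℝ V Q) + ε • (innerₗ Q s ∘ₗ LinearMap.snd ℝ V Q)

variable {D b ν ε}

@[simp] theorem linearizedForm_apply (u : V) (g w : V × Q) :
    linearizedForm D b ν ε u g w =
      ν * ⟪g.1, w.1⟫ + b u g.1 w.1 - ⟪g.2, D w.1⟫ + (ε * ⟪g.2, w.2⟫ + ⟪D g.1, w.2⟫) := rfl

@[simp] theorem linearizedRhs_apply (G h : V) (s : Q) (w : V × Q) :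
    linearizedRhs b ε G h s w = -b h G w.1 + ε * ⟪s, w.2⟫ := rfl

theorem linearizedForm_apply_self {u : V} (hskew : ∀ v, b u v v = 0) (g : V × Q) :
    linearizedForm D b ν ε u g g = ν * ‖g.1‖ ^ 2 + ε * ‖g.2‖ ^ 2 := by
  simp only [linearizedForm_apply, hskew, real_inner_self_eq_norm_sq, real_inner_comm g.2]
  ring

theorem linearizedForm_apply_self_eq_zero {u : V} (hskew : ∀ v, b u v v = 0)
    (hν : 0 < ν) (hε : 0 < ε) (g : V × Q) (hg : linearizedForm D b ν ε u g g = 0) : g = 0 := by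
  rw [linearizedForm_apply_self hskew] at hg
  have h1 : ‖g.1‖ ^ 2 = 0 := by nlinarith [sq_nonneg ‖g.1‖, sq_nonneg ‖g.2‖]
  have h2 : ‖g.2‖ ^ 2 = 0 := by nlinarith [sq_nonneg ‖g.1‖, sq_nonneg ‖g.2‖]
  simp only [sq_eq_zero_iff, norm_eq_zero] at h1 h2
  exact Prod.ext h1 h2

theorem linearizedSystem_iff (u G h : V) (s : Q) (g : V × Q) :
    ((∀ v : V, ν * ⟪g.1, v⟫ + b h G v + b u g.1 v - ⟪g.2, D v⟫ = 0) ∧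
      (∀ q : Q, ε * ⟪g.2, q⟫ + ⟪D g.1, q⟫ = ε * ⟪s, q⟫)) ↔
      linearizedForm D b ν ε u g = linearizedRhs b ε G h s := by
  constructor
  · rintro ⟨hv, hq⟩
    refine LinearMap.ext fun w => ?_
    simp only [linearizedForm_apply, linearizedRhs_apply]
    linarith [hv w.1, hq w.2]
  · intro hg
    refine ⟨fun v => ?_, fun q => ?_⟩
    · have := LinearMap.congr_fun hg (v, 0)
      simp only [linearizedForm_apply, linearizedRhs_apply, inner_zero_right] at this
      linarith
    · have := LinearMap.congr_fun hg (0, q)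
      simp only [linearizedForm_apply, linearizedRhs_apply, map_zero, inner_zero_right] at this
      linarith

theorem sqrt_le_of_linearizedForm_eq {u G h : V} {s : Q} {g : V × Q} {L : ℝ}
    (hskew : ∀ v, b u v v = 0) (hν : 0 < ν) (hε : 0 < ε) (hL : 1 ≤ L)
    (hbG : |b h G g.1| ≤ L * (ν * ‖h‖ * ‖g.1‖))
    (hg : linearizedForm D b ν ε u g = linearizedRhs b ε G h s) :
    √(ν * ‖g.1‖ ^ 2 + ε * ‖g.2‖ ^ 2) ≤ L * √(ν * ‖h‖ ^ 2 + ε * ‖s‖ ^ 2) := by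
  set X := √(ν * ‖g.1‖ ^ 2 + ε * ‖g.2‖ ^ 2)
  set Y := √(ν * ‖h‖ ^ 2 + ε * ‖s‖ ^ 2)
  have hX : 0 ≤ X := Real.sqrt_nonneg _
  have hY : 0 ≤ Y := Real.sqrt_nonneg _
  have hs : ε * ⟪s, g.2⟫ ≤ L * (ε * ‖s‖ * ‖g.2‖) := by
    have := real_inner_le_norm s g.2
    have : 0 ≤ ε * ‖s‖ * ‖g.2‖ := by positivity
    nlinarith
  have henergy : X ^ 2 ≤ L * Y * X :=
    calc X ^ 2 = linearizedForm D b ν ε u g g := by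
          rw [Real.sq_sqrt (by positivity), linearizedForm_apply_self hskew]
      _ = -b h G g.1 + ε * ⟪s, g.2⟫ := by rw [hg, linearizedRhs_apply]
      _ ≤ L * (ν * ‖h‖ * ‖g.1‖ + ε * ‖s‖ * ‖g.2‖) := by linarith [neg_abs_le (b h G g.1)]
      _ ≤ L * (Y * X) :=
          mul_le_mul_of_nonneg_left (mul_add_mul_le_sqrt_mul_sqrt hν.le hε.le _ _ _ _) (by linarith)
      _ = L * Y * X := by ring
  by_contra! hlt
  nlinarith [mul_nonneg (zero_le_one.trans hL) hY]

end LinearizedSystem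

theorem ipp_derivative_wellposed_and_bounded
    {V Q : Type*} [NormedAddCommGroup V] [InnerProductSpace ℝ V] [FiniteDimensional ℝ V]
    [NormedAddCommGroup Q] [InnerProductSpace ℝ Q] [FiniteDimensional ℝ Q]
    (D : V →ₗ[ℝ] Q)
    (b : V →ₗ[ℝ] V →ₗ[ℝ] V →ₗ[ℝ] ℝ)
    (hskew : ∀ u v : V, b u v v = 0)
    (M : ℝ) (hbM : ∀ u v w : V, |b u v w| ≤ M * ‖u‖ * ‖v‖ * ‖w‖)
    (ν ε : ℝ) (hν : 0 < ν) (hε : 0 < ε)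
    (f : V →L[ℝ] ℝ)
    (κ : ℝ) (hκdef : κ = M * ν⁻¹ ^ 2 * ‖f‖)
    (u : V) (p : Q)
    (G₁up : V) (hG₁bd : ‖G₁up‖ ≤ ν⁻¹ * ‖f‖ + Real.sqrt (ε / ν) * ‖p‖)
    (h : V) (s : Q) :
    (∃! gg : V × Q,
      (∀ v : V, ν * ⟪gg.1, v⟫ + b h G₁up v + b u gg.1 v - ⟪gg.2, D v⟫ = 0) ∧
      (∀ q : Q, ε * ⟪gg.2, q⟫ + ⟪D gg.1, q⟫ = ε * ⟪s, q⟫)) ∧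
    (∀ g₁ : V, ∀ g₂ : Q,
      (∀ v : V, ν * ⟪g₁, v⟫ + b h G₁up v + b u g₁ v - ⟪g₂, D v⟫ = 0) →
      (∀ q : Q, ε * ⟪g₂, q⟫ + ⟪D g₁, q⟫ = ε * ⟪s, q⟫) →
      Real.sqrt (ν * ‖g₁‖ ^ 2 + ε * ‖g₂‖ ^ 2) ≤
        max 1 (κ + Real.sqrt (ε / ν ^ 3) * M * ‖p‖) *
          Real.sqrt (ν * ‖h‖ ^ 2 + ε * ‖s‖ ^ 2)) := by
  set K := κ + √(ε / ν ^ 3) * M * ‖p‖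
  have hMR : M * (ν⁻¹ * ‖f‖ + √(ε / ν) * ‖p‖) = ν * K := by
    rw [← sqrt_div_pow_three_mul_self ε hν.le]
    simp only [K, hκdef]
    field_simp
  have hbG : ∀ z, |b h G₁up z| ≤ max 1 K * (ν * ‖h‖ * ‖z‖) := fun z =>
    calc |b h G₁up z| ≤ max 0 (ν * K) * (‖h‖ * ‖z‖) :=
          hMR ▸ abs_trilinear_le_of_norm_le hbM h z hG₁bd
      _ ≤ (ν * max 1 K) * (‖h‖ * ‖z‖) := by
          gcongr
          exact max_le (by positivity) (by gcongr; exact le_max_right _ _)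
      _ = max 1 K * (ν * ‖h‖ * ‖z‖) := by ring
  refine ⟨?_, fun g₁ g₂ hv hq => ?_⟩
  · exact (existsUnique_congr (linearizedSystem_iff u G₁up h s)).mpr
      (existsUnique_apply_eq_of_apply_self_eq_zero _
        (linearizedForm_apply_self_eq_zero (hskew u) hν hε) _)
  · exact sqrt_le_of_linearizedForm_eq (g := (g₁, g₂)) (hskew u) hν hε (le_max_left _ _)
      (hbG g₁) ((linearizedSystem_iff u G₁up h s (g₁, g₂)).mp ⟨hv, hq⟩)
end
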